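/- arXiv:2304.11932 — 2 statements merged into one kernel-verified Lean document; each statement's English description precedes it below -/
import Mathlib

section
/- For every word u over a finite alphabet A, ι(u) ≤ ζ(u) ≤ ι(u) + 1. -/
/-- The subword universality index `ι(u)`: the largest `k` such that every word of
length `k` over the alphabet `A` is a subword (subsequence) of `u`. -/
noncomputable def univIndex {A : Type*} (u : List A) : ℕ :=
  sSup {k : ℕ | ∀ w : List A, w.length = k → w.Sublist u}

/-- The circular subword universality index `ζ(u)`: the maximum of `ι(u')` over all
conjugates `u'` of `u` (equivalently, over all rotations of `u`). -/
noncomputable def circIndex {A : Type*} (u : List A) : ℕ :=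
  (Finset.range (u.length + 1)).sup fun i => univIndex (u.drop i ++ u.take i)

/-! A `k`-universal word factors as `p₁ ⋯ p_k s` with every `pᵢ` containing each letter.
The cut between `w` and `v` in `w ++ v` falls inside at most one of these factors, so
`ι(w ++ v) ≤ ι(w) + ι(v) + 1`, while `ι(v) + ι(w) ≤ ι(v ++ w)` by concatenating embeddings.
Hence no rotation of `u` has index above `ι(u) + 1`, and `u` is itself its rotation by `0`. -/

open List

namespace List

variable {A : Type*}

theorem Sublist.of_cons_of_notMem_take {c : A} {w u : List A} {m : ℕ}
    (h : c :: w <+ u) (hc : c ∉ u.take m) : w <+ u.drop (m + 1) := by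
  induction m generalizing u with
  | zero => simpa using h.tail
  | succ m ih =>
    cases u with
    | nil => exact absurd h (by simp)
    | cons b u =>
      rw [take_succ_cons, mem_cons, not_or] at hc
      exact ih (h.of_cons_of_ne hc.1) hc.2

end List

section Universal

variable {A : Type*}

def IsUniversal (k : ℕ) (u : List A) : Prop :=
  ∀ w : List A, w.length = k → w <+ u

theorem isUniversal_zero (u : List A) : IsUniversal 0 u := by
  intro w hw
  simp [length_eq_zero_iff.mp hw]

theorem isUniversal_one_iff {u : List A} : IsUniversal 1 u ↔ ∀ a, a ∈ u := by
  refine ⟨fun h a => singleton_sublist.mp (h [a] rfl), fun h w hw => ?_⟩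
  obtain ⟨a, rfl⟩ := length_eq_one_iff.mp hw
  exact singleton_sublist.mpr (h a)

theorem IsUniversal.mono {k : ℕ} {u v : List A} (h : IsUniversal k u) (huv : u <+ v) :
    IsUniversal k v :=
  fun w hw => (h w hw).trans huv

theorem IsUniversal.append {m n : ℕ} {u v : List A} (hu : IsUniversal m u)
    (hv : IsUniversal n v) : IsUniversal (m + n) (u ++ v) := by
  intro w hw
  rw [← take_append_drop m w]
  exact (hu _ (by simp [hw])).append (hv _ (by simp [hw]))

theorem IsUniversal.mem {k : ℕ} {u : List A} (h : IsUniversal (k + 1) u) (a : A) : a ∈ u :=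
  (h (replicate (k + 1) a) (length_replicate ..)).subset (mem_replicate.mpr ⟨by omega, rfl⟩)

/-- Splitting off the shortest prefix that contains every letter. -/
theorem IsUniversal.exists_eq_append {k : ℕ} {u : List A} (h : IsUniversal (k + 1) u) :
    ∃ p s, u = p ++ s ∧ IsUniversal 1 p ∧ IsUniversal k s := by
  classical
  have hex : ∃ n, ∀ a, a ∈ u.take n := ⟨u.length, by simpa using h.mem⟩
  refine ⟨u.take (Nat.find hex), u.drop (Nat.find hex), (take_append_drop ..).symm,
    isUniversal_one_iff.mpr (Nat.find_spec hex), fun w hw => ?_⟩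
  rcases hn : Nat.find hex with _ | m
  · cases w with
    | nil => exact nil_sublist _
    | cons a _ => simpa [hn] using Nat.find_spec hex a
  · obtain ⟨c, hc⟩ : ∃ c, c ∉ u.take m := by
      simpa using Nat.find_min hex (m := m) (by omega)
    exact (h (c :: w) (by simp [hw])).of_cons_of_notMem_take hc

theorem IsUniversal.exists_of_append {k : ℕ} {w v : List A} (h : IsUniversal k (w ++ v)) :
    ∃ i j, k ≤ i + j + 1 ∧ IsUniversal i w ∧ IsUniversal j v := by
  induction k generalizing w with
  | zero => exact ⟨0, 0, by omega, isUniversal_zero w, isUniversal_zero v⟩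
  | succ k ih =>
    obtain ⟨p, s, hps, hp, hs⟩ := h.exists_eq_append
    rcases append_eq_append_iff.mp hps with ⟨a, -, rfl⟩ | ⟨c, rfl, rfl⟩
    · exact ⟨0, k, by omega, isUniversal_zero w, hs.mono (sublist_append_right a s)⟩
    · obtain ⟨i, j, hk, hi, hj⟩ := ih hs
      exact ⟨1 + i, j, by omega, hp.append hi, hj⟩

end Universal

section UnivIndex

variable {A : Type*}

theorem bddAbove_setOf_isUniversal [Nonempty A] (u : List A) :
    BddAbove {k | IsUniversal k u} :=
  ⟨u.length, fun k hk => by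
    simpa using (hk (replicate k (Classical.arbitrary A)) (length_replicate ..)).length_le⟩

theorem IsUniversal.le_univIndex [Nonempty A] {k : ℕ} {u : List A} (h : IsUniversal k u) :
    k ≤ univIndex u :=
  le_csSup (bddAbove_setOf_isUniversal u) h

theorem isUniversal_univIndex [Nonempty A] (u : List A) : IsUniversal (univIndex u) u :=
  Nat.sSup_mem ⟨0, isUniversal_zero u⟩ (bddAbove_setOf_isUniversal u)

theorem univIndex_add_univIndex_le [Nonempty A] (w v : List A) :
    univIndex w + univIndex v ≤ univIndex (w ++ v) :=
  ((isUniversal_univIndex w).append (isUniversal_univIndex v)).le_univIndex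

theorem univIndex_append_le [Nonempty A] (w v : List A) :
    univIndex (w ++ v) ≤ univIndex w + univIndex v + 1 := by
  obtain ⟨i, j, hk, hi, hj⟩ := (isUniversal_univIndex (w ++ v)).exists_of_append
  have := hi.le_univIndex
  have := hj.le_univIndex
  omega

theorem univIndex_append_le_univIndex_append_comm (w v : List A) :
    univIndex (w ++ v) ≤ univIndex (v ++ w) + 1 := by
  rcases isEmpty_or_nonempty A with _ | _
  · have hnil (l : List A) : l = [] := eq_nil_iff_forall_not_mem.mpr isEmptyElim
    rw [hnil w, hnil v]
    omega
  calc univIndex (w ++ v) ≤ univIndex w + univIndex v + 1 := univIndex_append_le w v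
    _ ≤ univIndex (v ++ w) + 1 := by linarith [univIndex_add_univIndex_le v w]

end UnivIndex

theorem univIndex_le_circIndex_le_general {A : Type*} (u : List A) :
    univIndex u ≤ circIndex u ∧ circIndex u ≤ univIndex u + 1 := by
  rw [circIndex]
  constructor
  · simpa using Finset.le_sup (f := fun i => univIndex (u.drop i ++ u.take i))
      (Finset.mem_range.mpr u.length.succ_pos)
  · refine Finset.sup_le fun i _ => ?_
    simpa using univIndex_append_le_univIndex_append_comm (u.drop i) (u.take i)

/-- `ι(u) ≤ ζ(u) ≤ ι(u) + 1`. -/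
theorem univIndex_le_circIndex_le {A : Type*} [Fintype A] [Nonempty A] (u : List A) :
    univIndex u ≤ circIndex u ∧ circIndex u ≤ univIndex u + 1 :=
  univIndex_le_circIndex_le_general u
end

section
/- For all words u and v over a finite alphabet A, ι(u·v) = ι(u) + ι(r(u)·v), where r(u) is the rest of the arch factorization of u. -/
open Classical in
/-- The arch-jumping function `α` of a word `w`: `α(i)` is the least `j` such that the
factor `w(i,j)` contains every letter of the alphabet `A`, undefined if no such `j` exists. -/
noncomputable def alphaJump {A : Type*} (w : List A) (i : ℕ) : Option ℕ :=
  if ∃ j, ∀ a : A, a ∈ (w.take j).drop i then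
    some (sInf {j : ℕ | ∀ a : A, a ∈ (w.take j).drop i})
  else none

/-- `αⁿ(i)`: the `n`-fold iteration of the arch-jumping function `α` of `w`, starting
from position `i`; `none` if some intermediate step is undefined. -/
noncomputable def alphaIter {A : Type*} (w : List A) (n i : ℕ) : Option ℕ :=
  (fun o => o.bind (alphaJump w))^[n] (some i)

/-- The number of arches in the arch factorization of `w`:
the largest `n` such that `αⁿ(0)` is defined. -/
noncomputable def numArches {A : Type*} (w : List A) : ℕ :=
  sSup {n : ℕ | (alphaIter w n 0).isSome}

/-- The rest `r(w)` of the arch factorization of `w`: the suffix of `w` remaining after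
its arches, i.e. after position `α^m(0)` where `m` is the number of arches. -/
noncomputable def archRest {A : Type*} (w : List A) : List A :=
  w.drop ((alphaIter w (numArches w) 0).getD 0)

/-!
Write `u = s₁⋯sₘ·r` for the arch factorization. Every arch contains every letter, so a word
of length `m` followed by any subword of `r·v` embeds into `u·v`, whence
`ι(u·v) ≥ m + ι(r·v)`. Conversely, the last letter of each arch occurs nowhere else in that arch,
so embedding the word of these `m` last letters into `u·v` consumes all `m` arches and whatever
follows it must embed into `r·v`, whence `ι(u·v) ≤ m + ι(r·v)`. Since `r` misses some letter,
`ι(r) = 0`, and `v = []` gives `ι(u) = m`.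
-/

namespace List

theorem Sublist.of_cons_sublist_append_cons {α : Type*} {b : α} {s t r : List α} (hb : b ∉ s)
    (h : b :: t <+ s ++ b :: r) : t <+ r := by
  induction s with
  | nil => exact cons_sublist_cons.1 h
  | cons c s ih =>
    rw [mem_cons, not_or] at hb
    rcases sublist_cons_iff.1 h with h | ⟨_, hbc, _⟩
    · exact ih hb.2 h
    · exact absurd (cons.inj hbc).1 hb.1

end List

open scoped List

section UnivIndex

variable {A : Type*} [Nonempty A]

theorem sublist_of_forall_length_eq {u w : List A} {k : ℕ}
    (h : ∀ w : List A, w.length = k → w <+ u) (hw : w.length ≤ k) : w <+ u :=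
  (List.sublist_append_left w _).trans
    (h (w ++ List.replicate (k - w.length) (Classical.arbitrary A)) (by simp; omega))

theorem le_univIndex_iff {u : List A} {k : ℕ} :
    k ≤ univIndex u ↔ ∀ w : List A, w.length ≤ k → w <+ u := by
  set S := {k : ℕ | ∀ w : List A, w.length = k → w <+ u}
  have hS : ∀ k, k ∈ S ↔ ∀ w : List A, w.length ≤ k → w <+ u := fun k =>
    ⟨fun h _ hw => sublist_of_forall_length_eq h hw, fun h w hw => h w hw.le⟩
  have hbdd : BddAbove S := ⟨u.length, fun k hk => by
    simpa using (hk (List.replicate k (Classical.arbitrary A)) (by simp)).length_le⟩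
  have hmem : univIndex u ∈ S := Nat.sSup_mem ⟨0, by simp [S]⟩ hbdd
  exact ⟨fun hk w hw => (hS _).1 hmem w (hw.trans hk), fun h => le_csSup hbdd ((hS k).2 h)⟩

end UnivIndex

section Arches

variable {A : Type*}

theorem alphaIter_succ (u : List A) (n i : ℕ) :
    alphaIter u (n + 1) i = (alphaJump u i).bind (alphaIter u n) := by
  unfold alphaIter
  rw [Function.iterate_succ_apply, Option.bind_some]
  cases alphaJump u i with
  | none => exact Function.iterate_fixed rfl n
  | some j => rfl

theorem alphaIter_succ' (u : List A) (n i : ℕ) :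
    alphaIter u (n + 1) i = (alphaIter u n i).bind (alphaJump u) :=
  Function.iterate_succ_apply' _ n _

theorem exists_not_mem_drop_of_alphaJump_eq_none {u : List A} {i : ℕ}
    (h : alphaJump u i = none) : ∃ a, a ∉ u.drop i := by
  classical
  unfold alphaJump at h
  split_ifs at h with hrich
  push Not at hrich
  simpa using hrich u.length

variable [Nonempty A]

theorem exists_drop_eq_of_alphaJump_eq_some {u : List A} {i j : ℕ}
    (h : alphaJump u i = some j) :
    ∃ s b, u.drop i = s ++ b :: u.drop j ∧ b ∉ s ∧ ∀ a, a ∈ s ++ [b] := by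
  classical
  unfold alphaJump at h
  split_ifs at h with hex
  cases h
  set j := sInf {j : ℕ | ∀ a : A, a ∈ (u.take j).drop i}
  have hrich : ∀ a : A, a ∈ (u.take j).drop i := Nat.sInf_mem hex
  have hpos : i < j := by
    have := List.ne_nil_of_mem (hrich (Classical.arbitrary A))
    simp only [ne_eq, List.drop_eq_nil_iff, List.length_take, inf_le_iff, not_or, not_le] at this
    omega
  have hmin : ¬ ∀ a : A, a ∈ (u.take (j - 1)).drop i :=
    Nat.notMem_of_lt_sInf (s := {j : ℕ | ∀ a : A, a ∈ (u.take j).drop i}) (m := j - 1)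
      (by omega)
  have hj : j ≤ u.length := by
    by_contra hlt
    exact hmin (by rwa [List.take_of_length_le (by omega)] at hrich ⊢)
  have htake : (u.take j).drop i = (u.take (j - 1)).drop i ++ [u[j - 1]] := by
    rw [← List.drop_append_of_le_length (by simp; omega), List.take_append_getElem,
      Nat.sub_add_cancel (by omega)]
  have hdrop : u.drop i = (u.take j).drop i ++ u.drop j := by
    rw [← List.drop_append_of_le_length (by simp; omega), List.take_append_drop]
  refine ⟨_, u[j - 1], by rw [hdrop, htake, List.append_assoc, List.singleton_append], ?_,
    htake ▸ hrich⟩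
  intro hb
  refine hmin fun a => ?_
  rcases List.mem_append.1 (htake ▸ hrich a) with ha | ha
  · exact ha
  · exact List.mem_singleton.1 ha ▸ hb

theorem append_sublist_of_alphaIter_eq_some {u v w y : List A} {n i q : ℕ}
    (h : alphaIter u n i = some q) (hw : w.length ≤ n) (hy : y <+ u.drop q ++ v) :
    w ++ y <+ u.drop i ++ v := by
  induction n generalizing i w with
  | zero =>
    cases h
    rw [List.length_eq_zero_iff.1 (Nat.le_zero.1 hw)]
    exact hy
  | succ n ih =>
    rw [alphaIter_succ, Option.bind_eq_some_iff] at h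
    obtain ⟨j, hj, hq⟩ := h
    obtain ⟨s, b, hdrop, -, hrich⟩ := exists_drop_eq_of_alphaJump_eq_some hj
    rw [hdrop, ← List.singleton_append, ← List.append_assoc, List.append_assoc]
    cases w with
    | nil => exact (ih hq (w := []) (Nat.zero_le n)).trans (List.sublist_append_right _ _)
    | cons a w =>
      exact (List.singleton_sublist.2 (hrich a)).append (ih hq (by simpa using hw))

/-- The witness is the word of last letters of the `n` arches: embedding it into the word
uses up all `n` arches. -/
theorem exists_length_eq_forall_sublist_of_alphaIter_eq_some {u v : List A} {n i q : ℕ}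
    (h : alphaIter u n i = some q) :
    ∃ x : List A, x.length = n ∧ ∀ y, x ++ y <+ u.drop i ++ v → y <+ u.drop q ++ v := by
  induction n generalizing i with
  | zero =>
    cases h
    exact ⟨[], rfl, fun _ hy => hy⟩
  | succ n ih =>
    rw [alphaIter_succ, Option.bind_eq_some_iff] at h
    obtain ⟨j, hj, hq⟩ := h
    obtain ⟨s, b, hdrop, hb, -⟩ := exists_drop_eq_of_alphaJump_eq_some hj
    obtain ⟨x, hx, hxy⟩ := ih hq
    refine ⟨b :: x, by simp [hx], fun y hy => hxy y ?_⟩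
    rw [hdrop, List.append_assoc, List.cons_append, List.cons_append] at hy
    exact hy.of_cons_sublist_append_cons hb

theorem le_univIndex_of_alphaIter_eq_some {u : List A} {n q : ℕ}
    (h : alphaIter u n 0 = some q) : n ≤ univIndex u :=
  le_univIndex_iff.2 fun _ hw => by
    simpa using append_sublist_of_alphaIter_eq_some (v := []) h hw (List.nil_sublist _)

theorem exists_archRest_eq_drop (u : List A) :
    ∃ p, alphaIter u (numArches u) 0 = some p ∧ alphaJump u p = none ∧ archRest u = u.drop p := by
  have hbdd : BddAbove {n | (alphaIter u n 0).isSome} := ⟨univIndex u, fun _ hn =>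
    le_univIndex_of_alphaIter_eq_some (Option.isSome_iff_exists.1 hn).choose_spec⟩
  obtain ⟨p, hp⟩ : ∃ p, alphaIter u (numArches u) 0 = some p :=
    Option.isSome_iff_exists.1 (Nat.sSup_mem (s := {n | (alphaIter u n 0).isSome}) ⟨0, rfl⟩ hbdd)
  refine ⟨p, hp, ?_, by simp [archRest, hp]⟩
  by_contra hjump
  have hsucc : (alphaIter u (numArches u + 1) 0).isSome := by
    rwa [alphaIter_succ', hp, Option.bind_some, Option.isSome_iff_ne_none]
  exact (le_csSup hbdd hsucc).not_gt (Nat.lt_succ_self _)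

theorem univIndex_archRest (u : List A) : univIndex (archRest u) = 0 := by
  obtain ⟨p, -, hjump, hrest⟩ := exists_archRest_eq_drop u
  obtain ⟨a, ha⟩ := exists_not_mem_drop_of_alphaJump_eq_none hjump
  by_contra h
  have := le_univIndex_iff.1 (Nat.one_le_iff_ne_zero.2 h) [a] le_rfl
  exact ha (hrest ▸ this.subset (List.mem_singleton_self a))

theorem univIndex_append_eq_numArches_add (u v : List A) :
    univIndex (u ++ v) = numArches u + univIndex (archRest u ++ v) := by
  obtain ⟨p, hp, -, hrest⟩ := exists_archRest_eq_drop u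
  rw [hrest]
  apply le_antisymm
  · by_contra! hlt
    obtain ⟨x, hx, hxy⟩ := exists_length_eq_forall_sublist_of_alphaIter_eq_some (v := v) hp
    refine (Nat.lt_succ_self _).not_ge (le_univIndex_iff.2 fun y hy => hxy y ?_)
    simpa using le_univIndex_iff.1 hlt (x ++ y) (by simp; omega)
  · refine le_univIndex_iff.2 fun w hw => ?_
    simpa using append_sublist_of_alphaIter_eq_some (v := v) (w := w.take (numArches u)) hp
      (List.length_take_le _ _)
      (le_univIndex_iff.1 le_rfl (w.drop (numArches u)) (by simp; omega))

theorem univIndex_eq_numArches (u : List A) : univIndex u = numArches u := by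
  simpa [univIndex_archRest] using univIndex_append_eq_numArches_add u []

end Arches

theorem univIndex_append_eq_general {A : Type*} [Nonempty A] (u v : List A) :
    univIndex (u ++ v) = univIndex u + univIndex (archRest u ++ v) := by
  rw [univIndex_append_eq_numArches_add, univIndex_eq_numArches u]

/-- `ι(u·v) = ι(u) + ι(r(u)·v)` where `r(u)` is the rest of the arch factorization of `u`. -/
theorem univIndex_append_eq {A : Type*} [Fintype A] [Nonempty A] (u v : List A) :
    univIndex (u ++ v) = univIndex u + univIndex (archRest u ++ v) :=
  univIndex_append_eq_general u v
end
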